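/- Let X be a topological space and ≪ a relation on X such that for every x, the chronological past I⁻(x) = {y : y ≪ x} is open. Let E ⊆ X and define, relative to a family of curves T(θ) : ℝ → X (continuous, with t ↦ T(θ)(t) strictly ≪-increasing), the function τ(r,θ) = sup {t : ¬ (r ≪ T(θ)(t))} assuming this set is nonempty and bounded above for all r, and assuming r ≪ T(θ)(t) holds for all t > τ(r,θ) and fails for all t < τ(r,θ). Then for each fixed θ, the function r ↦ τ(r,θ) is upper semicontinuous on E. -/
import Mathlib


/-- Upper semicontinuity of the future Fermat potential (Proposition 3.8). -/
theorem stmt1 {X : Type*} [TopologicalSpace X] (lt : X → X → Prop)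
    (hopenPast : ∀ x, IsOpen {y | lt y x})
    {Θ : Type*} (T : Θ → ℝ → X)
    (hcont : ∀ θ, Continuous (T θ))
    (hmono : ∀ θ, ∀ s t : ℝ, s < t → lt (T θ s) (T θ t))
    (E : Set X) (τ : X → Θ → ℝ)
    (hsup : ∀ r θ, IsLUB {t : ℝ | ¬ lt r (T θ t)} (τ r θ))
    (habove : ∀ r θ, ∀ t : ℝ, τ r θ < t → lt r (T θ t))
    (hbelow : ∀ r θ, ∀ t : ℝ, t < τ r θ → ¬ lt r (T θ t))
    (θ : Θ) :
    UpperSemicontinuousOn (fun r => τ r θ) E := by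
  intro r hr y hy
  obtain ⟨t, ht1, ht2⟩ := exists_between hy
  have hrt : lt r (T θ t) := habove r θ t ht1
  have hmem : r ∈ {z | lt z (T θ t)} := hrt
  filter_upwards [mem_nhdsWithin_of_mem_nhds ((hopenPast (T θ t)).mem_nhds hmem)] with z hz
  by_contra h
  push_neg at h
  exact hbelow z θ t (lt_of_lt_of_le ht2 h) hz
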